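/- Let K ⊂ ℝ² be a compact connected set with finite one-dimensional Hausdorff measure, let x ∈ K and 0 < r < diam(K) be such that β_K(x, r) ≤ 1/2. Then H¹(K ∩ B(x, r)) ≥ 2r − 3r·β_K(x, r). -/

import Mathlib

open Metric Set

noncomputable def lineThrough (x v : EuclideanSpace ℝ (Fin 2)) :
    Set (EuclideanSpace ℝ (Fin 2)) :=
  {z | ∃ t : ℝ, z = x + t • v}

/-- The bilateral flatness of `K` in the ball `B(x, r)`. -/
noncomputable def flat (K : Set (EuclideanSpace ℝ (Fin 2)))
    (x : EuclideanSpace ℝ (Fin 2)) (r : ℝ) : ℝ :=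
  (1 / r) * ⨅ v : sphere (0 : EuclideanSpace ℝ (Fin 2)) 1,
    max (⨆ y : (K ∩ closedBall x r : Set _), infDist (y : EuclideanSpace ℝ (Fin 2)) (lineThrough x v))
        (⨆ y : (lineThrough x v ∩ closedBall x r : Set _), infDist (y : EuclideanSpace ℝ (Fin 2)) K)

open MeasureTheory

open RealInnerProductSpace

section aux

local notation "E2" => EuclideanSpace ℝ (Fin 2)

/-- Boundary bumping lemma: in a compact preconnected set `X`, the connected component of
`p` inside `X ∩ A` (for `A` closed) meets the frontier of `A`, provided `X ⊄ A`. -/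
lemma stmt4_bump {α : Type*} [TopologicalSpace α] [T2Space α]
    {X A : Set α} (hX : IsCompact X) (hXc : IsPreconnected X)
    (hA : IsClosed A) {p : α} (hpX : p ∈ X) (hpA : p ∈ A) (hq : ¬ X ⊆ A) :
    (connectedComponentIn (X ∩ A) p ∩ frontier A).Nonempty := by
  set F := X ∩ A with hF
  have hpF : p ∈ F := ⟨hpX, hpA⟩
  have hFcp : IsCompact F := hX.inter_right hA
  haveI : CompactSpace F := isCompact_iff_compactSpace.mp hFcp
  by_contra hcon
  rw [Set.not_nonempty_iff_eq_empty] at hcon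
  set p' : F := ⟨p, hpF⟩ with hp'
  have himg : connectedComponentIn F p = (Subtype.val : F → α) '' connectedComponent p' :=
    connectedComponentIn_eq_image hpF
  set S : Set F := Subtype.val ⁻¹' (frontier A) with hS
  have hScl : IsClosed S := (isClosed_frontier).preimage continuous_subtype_val
  have hScp : IsCompact S := hScl.isCompact
  have hdisj : S ∩ connectedComponent p' = ∅ := by
    ext z
    simp only [Set.mem_inter_iff, Set.mem_empty_iff_false, iff_false, not_and]
    intro hzS hzC
    have : (z : α) ∈ connectedComponentIn F p ∩ frontier A :=
      ⟨himg ▸ ⟨z, hzC, rfl⟩, hzS⟩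
    rw [hcon] at this; exact this
  rw [connectedComponent_eq_iInter_isClopen p'] at hdisj
  obtain ⟨t, ht⟩ := hScp.elim_finite_subfamily_closed _
    (fun Z : {Z : Set F // IsClopen Z ∧ p' ∈ Z} => Z.2.1.isClosed) hdisj
  set U : Set F := ⋂ i ∈ t, (i : {Z : Set F // IsClopen Z ∧ p' ∈ Z}).1 with hU
  have hUclopen : IsClopen U := by
    apply Set.Finite.isClopen_biInter t.finite_toSet
    exact fun i _ => i.2.1
  have hpU : p' ∈ U := Set.mem_iInter₂.2 fun i _ => i.2.2
  have hUS : U ∩ S = ∅ := by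
    rw [Set.inter_comm]; exact ht
  set U'' : Set α := Subtype.val '' U with hU''
  have hU''sub : U'' ⊆ F := by rintro _ ⟨z, _, rfl⟩; exact z.2
  have hpU'' : p ∈ U'' := ⟨p', hpU, rfl⟩
  have hU''fr : U'' ∩ frontier A = ∅ := by
    ext z
    simp only [Set.mem_inter_iff, Set.mem_empty_iff_false, iff_false, not_and]
    rintro ⟨w, hw, rfl⟩ hfr
    have : w ∈ U ∩ S := ⟨hw, hfr⟩
    rw [hUS] at this; exact this
  have hU''closed : IsClosed U'' :=
    ((hUclopen.isClosed.isCompact).image continuous_subtype_val).isClosed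
  obtain ⟨V₀, hV₀open, hV₀⟩ := isOpen_induced_iff.mp hUclopen.isOpen
  have hUimg : U'' = F ∩ V₀ := by
    rw [hU'', ← hV₀]
    ext z
    constructor
    · rintro ⟨w, hw, rfl⟩; exact ⟨w.2, hw⟩
    · rintro ⟨hzF, hzV⟩; exact ⟨⟨z, hzF⟩, hzV, rfl⟩
  have hIntA : ∀ z ∈ U'', z ∈ interior A := by
    intro z hz
    have hzA : z ∈ A := (hU''sub hz).2
    by_contra hni
    have h1 : z ∈ frontier A := by
      rw [hA.frontier_eq]; exact ⟨hzA, hni⟩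
    have h2 : z ∈ U'' ∩ frontier A := ⟨hz, h1⟩
    rw [hU''fr] at h2; exact h2
  have key : U'' = X ∩ (V₀ ∩ interior A) := by
    ext z
    constructor
    · intro hz
      exact ⟨(hU''sub hz).1, (hUimg ▸ hz).2, hIntA z hz⟩
    · rintro ⟨hzX, hzV, hzI⟩
      rw [hUimg]
      exact ⟨⟨hzX, interior_subset hzI⟩, hzV⟩
  have hXsub : X ⊆ (V₀ ∩ interior A) ∪ U''ᶜ := by
    intro z hz
    by_cases h : z ∈ U''
    · exact Or.inl (key ▸ h).2
    · exact Or.inr h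
  have h1 : (X ∩ (V₀ ∩ interior A)).Nonempty := ⟨p, key ▸ hpU''⟩
  have hempty : ¬(X ∩ ((V₀ ∩ interior A) ∩ U''ᶜ)).Nonempty := by
    rintro ⟨z, hzX, hzu, hzc⟩
    exact hzc (key ▸ ⟨hzX, hzu⟩)
  have h2 : ¬(X ∩ U''ᶜ).Nonempty := by
    intro h2
    exact hempty (hXc _ _ (hV₀open.inter isOpen_interior) (hU''closed.isOpen_compl) hXsub h1 h2)
  rw [Set.not_nonempty_iff_eq_empty] at h2
  apply hq
  intro z hz
  have hz' : z ∈ U'' := by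
    by_contra hzu
    have : z ∈ X ∩ U''ᶜ := ⟨hz, hzu⟩
    rw [h2] at this; exact this
  exact (hU''sub hz').2

lemma stmt4_proj_lip (x v : E2) (hv : ‖v‖ ≤ 1) :
    LipschitzWith 1 (fun y : E2 => ⟪y - x, v⟫) := by
  apply LipschitzWith.of_dist_le_mul
  intro y z
  rw [Real.dist_eq, NNReal.coe_one, one_mul, dist_eq_norm]
  have h : (y - x) - (z - x) = y - z := by abel
  calc |⟪y - x, v⟫ - ⟪z - x, v⟫| = |⟪y - z, v⟫| := by
        rw [← inner_sub_left, h]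
    _ ≤ ‖y - z‖ * ‖v‖ := abs_real_inner_le_norm _ _
    _ ≤ ‖y - z‖ * 1 := by
        exact mul_le_mul_of_nonneg_left hv (norm_nonneg _)
    _ = ‖y - z‖ := mul_one _

lemma stmt4_pyth (w v : E2) (hv : ‖v‖ = 1) :
    ‖w‖^2 = ‖w - ⟪w, v⟫ • v‖^2 + ⟪w, v⟫^2 := by
  have h1 : ‖w - ⟪w, v⟫ • v‖^2 = ‖w‖^2 - 2 * ⟪w, ⟪w, v⟫ • v⟫ + ‖⟪w, v⟫ • v‖^2 := by
    rw [@norm_sub_sq_real]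
  have h2 : ⟪w, ⟪w, v⟫ • v⟫ = ⟪w, v⟫ * ⟪w, v⟫ := real_inner_smul_right _ _ _
  have h3 : ‖⟪w, v⟫ • v‖^2 = ⟪w, v⟫^2 := by
    rw [norm_smul, hv, mul_one, Real.norm_eq_abs, sq_abs]
  rw [h1, h2, h3]; ring

lemma stmt4_proj_dist_le (x v y : E2) (hv : ‖v‖ = 1) :
    ‖(y - x) - ⟪y - x, v⟫ • v‖ ≤ infDist y (lineThrough x v) := by
  have hne : (lineThrough x v).Nonempty := ⟨x, 0, by simp⟩
  set w := y - x with hw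
  set c := ⟪w, v⟫ with hc
  have key : ∀ z ∈ lineThrough x v, ‖w - c • v‖ ≤ dist y z := by
    rintro z ⟨t, rfl⟩
    rw [dist_eq_norm]
    have hz : y - (x + t • v) = w - t • v := by rw [hw]; abel
    rw [hz]
    have e1 : ‖w - t • v‖^2 = ‖w‖^2 - 2 * (t * c) + t^2 := by
      rw [@norm_sub_sq_real, real_inner_smul_right, norm_smul, hv, mul_one, Real.norm_eq_abs,
        sq_abs]
      try ring_nf
    have e2 : ‖w - c • v‖^2 = ‖w‖^2 - c^2 := by
      have := stmt4_pyth w v hv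
      linarith
    nlinarith [norm_nonneg (w - t • v), norm_nonneg (w - c • v), sq_nonneg (t - c)]
  by_contra hlt
  push_neg at hlt
  obtain ⟨z, hz, hdz⟩ := (infDist_lt_iff hne).mp hlt
  exact absurd (key z hz) (by linarith)

lemma stmt4_measure_interval {C : Set E2} (hC : IsPreconnected C) (x v : E2) (hv : ‖v‖ ≤ 1)
    {a b : ℝ} (ha : a ∈ (fun y : E2 => ⟪y - x, v⟫) '' C)
    (hb : b ∈ (fun y : E2 => ⟪y - x, v⟫) '' C) :
    ENNReal.ofReal (b - a) ≤ μH[1] C := by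
  have hlip := stmt4_proj_lip x v hv
  have himg : IsPreconnected ((fun y : E2 => ⟪y - x, v⟫) '' C) :=
    hC.image _ hlip.continuous.continuousOn
  have hIcc : Icc a b ⊆ (fun y : E2 => ⟪y - x, v⟫) '' C := himg.Icc_subset ha hb
  calc ENNReal.ofReal (b - a) = volume (Icc a b) := (Real.volume_Icc).symm
    _ = μH[1] (Icc a b) := by rw [MeasureTheory.hausdorffMeasure_real]
    _ ≤ μH[1] ((fun y : E2 => ⟪y - x, v⟫) '' C) := measure_mono hIcc
    _ ≤ μH[1] C := by simpa using hlip.hausdorffMeasure_image_le zero_le_one C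

end aux

set_option maxHeartbeats 1000000 in
theorem stmt4 (K : Set (EuclideanSpace ℝ (Fin 2))) (hKcp : IsCompact K)
    (hKconn : IsConnected K) (hKfin : μH[1] K < ⊤)
    (x : EuclideanSpace ℝ (Fin 2)) (hx : x ∈ K) (r : ℝ) (hr : 0 < r)
    (hrd : r < Metric.diam K) (hβ : flat K x r ≤ 1 / 2) :
    ENNReal.ofReal (2 * r - 3 * r * flat K x r) ≤ μH[1] (K ∩ ball x r) := by
  classical
  set β := flat K x r with hβdef
  set G : sphere (0 : EuclideanSpace ℝ (Fin 2)) 1 → ℝ := fun v =>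
    max (⨆ y : (K ∩ closedBall x r : Set _), infDist (y : EuclideanSpace ℝ (Fin 2)) (lineThrough x v))
        (⨆ y : (lineThrough x v ∩ closedBall x r : Set _), infDist (y : EuclideanSpace ℝ (Fin 2)) K)
    with hG
  have hflatG : β = (1 / r) * ⨅ v, G v := rfl
  haveI hsph : Nonempty (sphere (0 : EuclideanSpace ℝ (Fin 2)) 1) := by
    rw [nonempty_subtype]
    have := (NormedSpace.sphere_nonempty (E := EuclideanSpace ℝ (Fin 2))
      (x := 0) (r := 1)).mpr zero_le_one
    exact this
  have hG0 : ∀ v, 0 ≤ G v := by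
    intro v
    refine le_max_of_le_left ?_
    exact Real.iSup_nonneg fun y => infDist_nonneg
  have hβ0 : 0 ≤ β := by
    rw [hflatG]
    refine mul_nonneg (by positivity) (Real.iInf_nonneg hG0)
  have hinfG : ⨅ v, G v = r * β := by
    rw [hflatG]
    field_simp
  have hKne : K.Nonempty := ⟨x, hx⟩
  -- main quantitative step
  have main : ∀ η : ℝ, 0 < η →
      ENNReal.ofReal (2 * r - 3 * r * β - η) ≤ μH[1] (K ∩ ball x r) := by
    intro η hη
    -- choose parameters
    obtain ⟨ε, hεdef⟩ : ∃ ε : ℝ, ε = min (η / 100) (r / 100) := ⟨_, rfl⟩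
    obtain ⟨δ, hδdef⟩ : ∃ δ : ℝ, δ = min (η / 10) (r / 8) := ⟨_, rfl⟩
    obtain ⟨ε₂, hε₂def⟩ : ∃ ε₂ : ℝ, ε₂ = η / 100 := ⟨_, rfl⟩
    have hε : 0 < ε := by rw [hεdef]; exact lt_min (by linarith) (by linarith)
    have hδ : 0 < δ := by rw [hδdef]; exact lt_min (by linarith) (by linarith)
    have hε₂ : 0 < ε₂ := by rw [hε₂def]; linarith
    have hεη : ε ≤ η / 100 := hεdef ▸ min_le_left _ _
    have hεr : ε ≤ r / 100 := hεdef ▸ min_le_right _ _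
    have hδη : δ ≤ η / 10 := hδdef ▸ min_le_left _ _
    have hδr : δ ≤ r / 8 := hδdef ▸ min_le_right _ _
    obtain ⟨s, hsdef⟩ : ∃ s : ℝ, s = r - δ := ⟨_, rfl⟩
    obtain ⟨d, hddef⟩ : ∃ d : ℝ, d = r * β + ε := ⟨_, rfl⟩
    have hs7 : 7 * r / 8 ≤ s := by rw [hsdef]; linarith
    have hs0 : 0 < s := by linarith
    have hsr : s < r := by rw [hsdef]; linarith
    have hβr2 : r * β ≤ r / 2 := by
      have := mul_le_mul_of_nonneg_left hβ hr.le
      linarith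
    have hd0 : 0 < d := by
      rw [hddef]
      have := mul_nonneg hr.le hβ0
      linarith
    have hdhalf : d ≤ r / 2 + r / 100 := by
      rw [hddef]; linarith
    have hds : d < s := by linarith
    have hsd0 : 0 < s - d := by linarith
    obtain ⟨m, hmdef⟩ : ∃ m : ℝ, m = s - d ^ 2 / s := ⟨_, rfl⟩
    have hq0 : 0 ≤ d ^ 2 / s := by positivity
    have hqs : d ^ 2 / s * s = d ^ 2 := div_mul_cancel₀ _ hs0.ne'
    have hdd : d * d < s * s := mul_lt_mul'' hds hds hd0.le hd0.le
    have hm0 : 0 < m := by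
      rw [hmdef]
      have h5 : d ^ 2 / s < s := by
        rw [div_lt_iff₀ hs0]; linarith [hdd]
      linarith
    have hms : m ≤ s := by rw [hmdef]; linarith
    have hm2 : m ^ 2 ≤ s ^ 2 - d ^ 2 := by
      have hqd : d ^ 2 / s ≤ d := by
        rw [div_le_iff₀ hs0]
        have h8 : d * d ≤ d * s := mul_le_mul_of_nonneg_left hds.le hd0.le
        linarith [h8]
      have h2 : (d ^ 2 / s) ^ 2 ≤ d ^ 2 := pow_le_pow_left₀ hq0 hqd 2
      have e : (s - d ^ 2 / s) ^ 2 = s ^ 2 - 2 * (d ^ 2 / s * s) + (d ^ 2 / s) ^ 2 := by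
        ring
      rw [hmdef, e, hqs]
      linarith
    -- key final arithmetic
    have harith : 2 * r - 3 * r * β - η ≤ 2 * m - 2 * d - 2 * ε₂ := by
      have key : 2 * (d ^ 2 / s) ≤ r * β + η - 2 * δ - 2 * ε - 2 * ε₂ := by
        have hpos : 0 ≤ (r * β + η - 2 * δ - 2 * ε - 2 * ε₂) * s - 2 * d ^ 2 := by
          rw [hddef, hsdef, hε₂def]
          have texp : (r * β + η - 2 * δ - 2 * ε - 2 * (η / 100)) * (r - δ)
              - 2 * (r * β + ε) ^ 2
              = (r * β * r * (1 - 2 * β)) - (r * β) * δ + η * r - η * δ - 2 * (δ * r)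
                + 2 * (δ * δ) - 2 * (ε * r) + 2 * (ε * δ) - (η / 50) * r + (η / 50) * δ
                - 4 * ((r * β) * ε) - 2 * (ε * ε) - (r * β * r * (1 - 2 * β))
                + (r * β * r - 2 * (r * β) ^ 2) := by
            ring
          have t2 : 0 ≤ r * β * r * (1 - 2 * β) :=
            mul_nonneg (mul_nonneg (mul_nonneg hr.le hβ0) hr.le) (by linarith)
          have t2' : r * β * r * (1 - 2 * β) = r * β * r - 2 * (r * β) ^ 2 := by ring
          have t3 : (r * β) * ε ≤ (r / 2) * (η / 100) :=
            mul_le_mul hβr2 hεη hε.le (by positivity)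
          have t4 : ε * ε ≤ (η / 100) * (r / 100) :=
            mul_le_mul hεη hεr hε.le (by positivity)
          have t5 : (r * β) * δ ≤ (r / 2) * (η / 10) :=
            mul_le_mul hβr2 hδη hδ.le (by positivity)
          have t6 : η * δ ≤ η * (r / 8) := mul_le_mul_of_nonneg_left hδr hη.le
          have t7 : δ * r ≤ (η / 10) * r := mul_le_mul_of_nonneg_right hδη hr.le
          have t8 : ε * r ≤ (η / 100) * r := mul_le_mul_of_nonneg_right hεη hr.le
          have t9 : (0:ℝ) ≤ δ * δ := mul_nonneg hδ.le hδ.le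
          have t10 : (0:ℝ) ≤ ε * δ := mul_nonneg hε.le hδ.le
          have t11 : (0:ℝ) ≤ (η / 50) * δ := by positivity
          have t12 : (0:ℝ) ≤ η * r := mul_nonneg hη.le hr.le
          linarith [texp, t2, t2', t3, t4, t5, t6, t7, t8, t9, t10, t11, t12]
        have expand : (r * β + η - 2 * δ - 2 * ε - 2 * ε₂ - 2 * (d ^ 2 / s)) * s =
            ((r * β + η - 2 * δ - 2 * ε - 2 * ε₂) * s - 2 * ((d ^ 2 / s) * s)) := by ring
        rw [← sub_nonneg]
        have h6 : 0 ≤ (r * β + η - 2 * δ - 2 * ε - 2 * ε₂ - 2 * (d ^ 2 / s)) * s := by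
          rw [expand, hqs]; exact hpos
        have h7 : 0 * s ≤ (r * β + η - 2 * δ - 2 * ε - 2 * ε₂ - 2 * (d ^ 2 / s)) * s := by
          rw [zero_mul]; exact h6
        exact le_of_mul_le_mul_right h7 hs0
      have hm' : m = s - d ^ 2 / s := hmdef
      have hs' : s = r - δ := hsdef
      linarith [key, hq0]
    -- extract a good direction
    obtain ⟨v₀, hv₀⟩ : ∃ v, G v < r * β + ε := by
      apply exists_lt_of_ciInf_lt
      rw [hinfG]
      linarith
    have hv₀norm : ‖(v₀ : EuclideanSpace ℝ (Fin 2))‖ = 1 := by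
      have := v₀.2
      rwa [mem_sphere_zero_iff_norm] at this
    set v : EuclideanSpace ℝ (Fin 2) := (v₀ : EuclideanSpace ℝ (Fin 2)) with hvdef
    set π : EuclideanSpace ℝ (Fin 2) → ℝ := fun y => ⟪y - x, v⟫ with hπdef
    have hxline : x ∈ lineThrough x v := ⟨0, by simp⟩
    -- flatness facts
    have hA : ∀ y ∈ K ∩ closedBall x r, infDist y (lineThrough x v) ≤ d := by
      intro y hy
      have hbdd : BddAbove (Set.range fun y : (K ∩ closedBall x r : Set _) =>
          infDist (y : EuclideanSpace ℝ (Fin 2)) (lineThrough x v)) := by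
        refine ⟨r, ?_⟩
        rintro _ ⟨z, rfl⟩
        calc infDist (z : EuclideanSpace ℝ (Fin 2)) (lineThrough x v) ≤
            dist (z : EuclideanSpace ℝ (Fin 2)) x := infDist_le_dist_of_mem hxline
          _ ≤ r := z.2.2
      have h1 : infDist y (lineThrough x v) ≤
          ⨆ z : (K ∩ closedBall x r : Set _),
            infDist (z : EuclideanSpace ℝ (Fin 2)) (lineThrough x v) :=
        le_ciSup hbdd ⟨y, hy⟩
      calc infDist y (lineThrough x v) ≤ _ := h1
        _ ≤ G v₀ := le_max_left _ _
        _ ≤ d := by rw [hddef]; exact hv₀.le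
    have hB : ∀ t : ℝ, |t| ≤ r → infDist (x + t • v) K ≤ d := by
      intro t ht
      have hmem : x + t • v ∈ lineThrough x v ∩ closedBall x r := by
        refine ⟨⟨t, rfl⟩, ?_⟩
        rw [mem_closedBall, dist_eq_norm]
        simpa [norm_smul, hv₀norm] using ht
      have hbdd : BddAbove (Set.range fun z : (lineThrough x v ∩ closedBall x r : Set _) =>
          infDist (z : EuclideanSpace ℝ (Fin 2)) K) := by
        refine ⟨r, ?_⟩
        rintro _ ⟨z, rfl⟩
        calc infDist (z : EuclideanSpace ℝ (Fin 2)) K ≤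
            dist (z : EuclideanSpace ℝ (Fin 2)) x := infDist_le_dist_of_mem hx
          _ ≤ r := z.2.2
      have h1 : infDist (x + t • v) K ≤
          ⨆ z : (lineThrough x v ∩ closedBall x r : Set _),
            infDist (z : EuclideanSpace ℝ (Fin 2)) K :=
        le_ciSup hbdd ⟨x + t • v, hmem⟩
      calc infDist (x + t • v) K ≤ _ := h1
        _ ≤ G v₀ := le_max_right _ _
        _ ≤ d := by rw [hddef]; exact hv₀.le
    have hπline : ∀ t : ℝ, π (x + t • v) = t := by
      intro t
      rw [hπdef]
      simp only [add_sub_cancel_left]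
      rw [real_inner_smul_left, real_inner_self_eq_norm_sq, hv₀norm]
      ring
    have hπlip : ∀ y z : EuclideanSpace ℝ (Fin 2), |π y - π z| ≤ dist y z := by
      intro y z
      have := (stmt4_proj_lip x v hv₀norm.le).dist_le_mul y z
      rwa [Real.dist_eq, NNReal.coe_one, one_mul] at this
    -- density of projections
    have hdens : ∀ t : ℝ, |t| ≤ s - d →
        ∃ z ∈ K ∩ closedBall x s, |π z - t| ≤ d := by
      intro t ht
      have htr : |t| ≤ r := by
        calc |t| ≤ s - d := ht
          _ ≤ r := by linarith
      obtain ⟨p, hpK, hpd⟩ := hKcp.exists_infDist_eq_dist hKne (x + t • v)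
      have hdist : dist (x + t • v) p ≤ d := by
        rw [← hpd]; exact hB t htr
      refine ⟨p, ⟨hpK, ?_⟩, ?_⟩
      · rw [mem_closedBall]
        calc dist p x ≤ dist p (x + t • v) + dist (x + t • v) x := dist_triangle _ _ _
          _ ≤ d + |t| := by
              rw [dist_comm] at hdist
              have : dist (x + t • v) x = |t| := by
                rw [dist_eq_norm]
                simp [norm_smul, hv₀norm]
              linarith [hdist, this.le]
          _ ≤ d + (s - d) := by linarith
          _ = s := by ring
      · have := hπlip p (x + t • v)
        rw [hπline t] at this
        calc |π p - t| ≤ dist p (x + t • v) := this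
          _ = dist (x + t • v) p := dist_comm _ _
          _ ≤ d := hdist
    -- anchoring: points of K on the sphere of radius s have large projection
    have hanch : ∀ y ∈ K, dist y x = s → (π y ≤ -m ∨ m ≤ π y) := by
      intro y hyK hys
      have hyball : y ∈ K ∩ closedBall x r := ⟨hyK, by rw [mem_closedBall]; linarith⟩
      have h1 : ‖(y - x) - ⟪y - x, v⟫ • v‖ ≤ d := by
        calc ‖(y - x) - ⟪y - x, v⟫ • v‖ ≤ infDist y (lineThrough x v) :=
            stmt4_proj_dist_le x v y hv₀norm
          _ ≤ d := hA y hyball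
      have h2 : ‖y - x‖ ^ 2 = ‖(y - x) - ⟪y - x, v⟫ • v‖ ^ 2 + (π y) ^ 2 :=
        stmt4_pyth (y - x) v hv₀norm
      have h3 : ‖y - x‖ = s := by rw [← dist_eq_norm]; exact hys
      have h4 : m ≤ |π y| := by
        have hA2 : ‖(y - x) - ⟪y - x, v⟫ • v‖ ^ 2 ≤ d ^ 2 :=
          pow_le_pow_left₀ (norm_nonneg _) h1 2
        rw [h3] at h2
        have hsq : m ^ 2 ≤ (π y) ^ 2 := by linarith [h2, hA2, hm2]
        have hsq' : m ^ 2 ≤ |π y| ^ 2 := by rwa [sq_abs]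
        exact (pow_le_pow_iff_left₀ hm0.le (abs_nonneg _) (by norm_num)).mp hsq'
      rcases le_abs.mp h4 with h | h
      · right; exact h
      · left; linarith
    -- the two near-extremal points
    obtain ⟨zm, hzmF, hzmproj⟩ := hdens (-(s - d)) (by rw [abs_neg, abs_of_nonneg hsd0.le])
    obtain ⟨zp, hzpF, hzpproj⟩ := hdens (s - d) (by rw [abs_of_nonneg hsd0.le])
    have hzm1 : π zm ≤ -(s - 2 * d) := by
      have := abs_le.mp hzmproj
      linarith [this.2]
    have hzm2 : -s ≤ π zm := by
      have := abs_le.mp hzmproj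
      linarith [this.1]
    have hzp1 : s - 2 * d ≤ π zp := by
      have := abs_le.mp hzpproj
      linarith [this.1]
    set F : Set (EuclideanSpace ℝ (Fin 2)) := K ∩ closedBall x s with hFdef
    have hFsub : F ⊆ K ∩ ball x r := fun z hz =>
      ⟨hz.1, lt_of_le_of_lt (mem_closedBall.mp hz.2) hsr⟩
    -- per-component measure bound
    have hFcp : IsCompact F := hKcp.inter_right Metric.isClosed_closedBall
    haveI : CompactSpace F := isCompact_iff_compactSpace.mp hFcp
    have hCcompact : ∀ p ∈ F, IsCompact (connectedComponentIn F p) := by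
      intro p hp
      rw [connectedComponentIn_eq_image hp]
      exact (isClosed_connectedComponent.isCompact).image continuous_subtype_val
    have hcomp : ∀ p ∈ F, ∀ a b : ℝ,
        (∃ y ∈ connectedComponentIn F p, π y ≤ a) →
        (∃ y ∈ connectedComponentIn F p, b ≤ π y) →
        ENNReal.ofReal (b - a) ≤ μH[1] (connectedComponentIn F p) := by
      rintro p hp a b ⟨y₁, hy₁, hy₁p⟩ ⟨y₂, hy₂, hy₂p⟩
      have h1 : ENNReal.ofReal (b - a) ≤ ENNReal.ofReal (π y₂ - π y₁) :=
        ENNReal.ofReal_le_ofReal (by linarith)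
      refine h1.trans ?_
      exact stmt4_measure_interval isPreconnected_connectedComponentIn x v hv₀norm.le
        ⟨y₁, hy₁, rfl⟩ ⟨y₂, hy₂, rfl⟩
    have hcomp1 : ∀ p ∈ F, ∀ a b : ℝ,
        (∃ y ∈ connectedComponentIn F p, π y ≤ a) →
        (∃ y ∈ connectedComponentIn F p, b ≤ π y) →
        ENNReal.ofReal (b - a) ≤ μH[1] (K ∩ ball x r) := by
      intro p hp a b h1 h2
      refine (hcomp p hp a b h1 h2).trans (measure_mono ?_)
      exact (connectedComponentIn_subset F p).trans hFsub
    -- case: K inside the closed ball of radius s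
    rcases Classical.em (K ⊆ closedBall x s) with hsub | hsub
    · -- then K ∩ ball x r = K and K is connected
      have hKball : K ∩ ball x r = K := by
        apply inter_eq_left.mpr
        exact hsub.trans (closedBall_subset_ball hsr)
      obtain ⟨p, hpK, hpd⟩ := hKcp.exists_infDist_eq_dist hKne (x + r • v)
      have hp1 : dist (x + r • v) p ≤ d := by
        rw [← hpd]; exact hB r (le_of_eq (abs_of_nonneg hr.le))
      have hπp : r - d ≤ π p := by
        have := hπlip p (x + r • v)
        rw [hπline r] at this
        have h2' : dist p (x + r • v) ≤ d := by rw [dist_comm]; exact hp1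
        have h2 := abs_le.mp (this.trans h2')
        linarith [h2.1]
      obtain ⟨q, hqK, hqd⟩ := hKcp.exists_infDist_eq_dist hKne (x + (-r) • v)
      have hq1 : dist (x + (-r) • v) q ≤ d := by
        rw [← hqd]; exact hB (-r) (by rw [abs_neg]; exact le_of_eq (abs_of_nonneg hr.le))
      have hπq : π q ≤ -(r - d) := by
        have := hπlip q (x + (-r) • v)
        rw [hπline (-r)] at this
        have h2' : dist q (x + (-r) • v) ≤ d := by rw [dist_comm]; exact hq1
        have h2 := abs_le.mp (this.trans h2')
        linarith [h2.2]
      have hbound := stmt4_measure_interval (a := π q) (b := π p) hKconn.isPreconnected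
        x v hv₀norm.le ⟨q, hqK, rfl⟩ ⟨p, hpK, rfl⟩
      rw [hKball]
      refine le_trans (ENNReal.ofReal_le_ofReal ?_) hbound
      have hd' : d = r * β + ε := hddef
      have hrβ : 0 ≤ r * β := mul_nonneg hr.le hβ0
      linarith [hπp, hπq]
    · -- main case: use boundary bumping
      have hs0' : s ≠ 0 := hs0.ne'
      have hbump : ∀ p ∈ F, ∃ y ∈ connectedComponentIn F p, dist y x = s := by
        intro p hp
        obtain ⟨y, hy1, hy2⟩ := stmt4_bump hKcp hKconn.isPreconnected
          Metric.isClosed_closedBall hp.1 hp.2 hsub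
        rw [frontier_closedBall x hs0'] at hy2
        exact ⟨y, hy1, mem_sphere.mp hy2⟩
      have hanchF : ∀ p ∈ F,
          (∃ y ∈ connectedComponentIn F p, π y ≤ -m) ∨
          (∃ y ∈ connectedComponentIn F p, m ≤ π y) := by
        intro p hp
        obtain ⟨y, hy1, hy2⟩ := hbump p hp
        have hyK : y ∈ K := ((connectedComponentIn_subset F p) hy1).1
        rcases hanch y hyK hy2 with h | h
        · exact Or.inl ⟨y, hy1, h⟩
        · exact Or.inr ⟨y, hy1, h⟩
      -- goal via ofReal mono
      refine le_trans (ENNReal.ofReal_le_ofReal harith) ?_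
      -- case: the component of zm reaches the right
      rcases Classical.em (∃ y ∈ connectedComponentIn F zm, m ≤ π y) with hc1 | hc1
      · have := hcomp1 zm hzmF (-(s - 2 * d)) m
          ⟨zm, mem_connectedComponentIn hzmF, hzm1⟩ hc1
        refine le_trans (ENNReal.ofReal_le_ofReal ?_) this
        linarith
      have hLzm : ∃ y ∈ connectedComponentIn F zm, π y ≤ -m := by
        rcases hanchF zm hzmF with h | h
        · exact h
        · exact absurd h hc1
      rcases Classical.em (∃ y ∈ connectedComponentIn F zp, π y ≤ -m) with hc2 | hc2
      · have := hcomp1 zp hzpF (-m) (s - 2 * d)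
          hc2 ⟨zp, mem_connectedComponentIn hzpF, hzp1⟩
        refine le_trans (ENNReal.ofReal_le_ofReal ?_) this
        linarith
      -- the set of left-anchored points
      set SL : Set (EuclideanSpace ℝ (Fin 2)) :=
        {p | p ∈ F ∧ ∃ y ∈ connectedComponentIn F p, π y ≤ -m} with hSLdef
      have hSLne : (π '' SL).Nonempty := ⟨π zm, zm, ⟨hzmF, hLzm⟩, rfl⟩
      have hSLbdd : BddAbove (π '' SL) := by
        refine ⟨s, ?_⟩
        rintro _ ⟨p, hp, rfl⟩
        have : |π p| ≤ s := by
          have h1 : |π p| ≤ ‖p - x‖ * ‖v‖ := abs_real_inner_le_norm _ _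
          rw [hv₀norm, mul_one] at h1
          have h2 : ‖p - x‖ ≤ s := by
            rw [← dist_eq_norm]
            exact mem_closedBall.mp hp.1.2
          linarith
        exact (abs_le.mp this).2
      set T : ℝ := sSup (π '' SL) with hTdef
      obtain ⟨_, ⟨p₀, hp₀SL, rfl⟩, hp₀T⟩ := exists_lt_of_lt_csSup hSLne
        (show T - ε₂ < T by linarith)
      by_cases hc3 : s - 2 * d - ε₂ < T
      · -- left-anchored component reaching far right
        have hπp₀ : s - 2 * d - 2 * ε₂ ≤ π p₀ := by linarith
        have := hcomp1 p₀ hp₀SL.1 (-m) (s - 2 * d - 2 * ε₂)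
          hp₀SL.2 ⟨p₀, mem_connectedComponentIn hp₀SL.1, hπp₀⟩
        refine le_trans (ENNReal.ofReal_le_ofReal ?_) this
        linarith
      · push_neg at hc3
        have hTlb : -s ≤ T := le_csSup hSLbdd ⟨zm, ⟨hzmF, hLzm⟩, rfl⟩ |>.trans' hzm2
        set t : ℝ := T + d + ε₂ with htdef
        have htabs : |t| ≤ s - d := by
          rw [abs_le]
          constructor
          · rw [htdef]; linarith
          · rw [htdef]; linarith
        obtain ⟨w, hwF, hwproj⟩ := hdens t htabs
        have hw1 : T + ε₂ ≤ π w := by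
          have := abs_le.mp hwproj
          rw [htdef] at this
          linarith [this.1]
        have hw2 : π w ≤ T + 2 * d + ε₂ := by
          have := abs_le.mp hwproj
          rw [htdef] at this
          linarith [this.2]
        have hwnotSL : w ∉ SL := by
          intro hwSL
          have : π w ≤ T := le_csSup hSLbdd ⟨w, hwSL, rfl⟩
          linarith
        have hRw : ∃ y ∈ connectedComponentIn F w, m ≤ π y := by
          rcases hanchF w hwF with h | h
          · exact absurd ⟨hwF, h⟩ hwnotSL
          · exact h
        rcases Classical.em (w ∈ connectedComponentIn F p₀) with hwc | hwc
        · -- same component: it spans [-m, m]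
          have heq : connectedComponentIn F w = connectedComponentIn F p₀ :=
            (connectedComponentIn_eq hwc).symm
          have := hcomp1 p₀ hp₀SL.1 (-m) m hp₀SL.2 (heq ▸ hRw)
          refine le_trans (ENNReal.ofReal_le_ofReal ?_) this
          linarith
        · -- two disjoint components
          have hdisj : Disjoint (connectedComponentIn F p₀) (connectedComponentIn F w) := by
            rw [Set.disjoint_left]
            intro z hz1 hz2
            have h1 : connectedComponentIn F z = connectedComponentIn F p₀ :=
              (connectedComponentIn_eq hz1).symm
            have h2 : connectedComponentIn F z = connectedComponentIn F w :=
              (connectedComponentIn_eq hz2).symm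
            apply hwc
            rw [← h1, h2]
            exact mem_connectedComponentIn hwF
          have hmeas : MeasurableSet (connectedComponentIn F w) :=
            (hCcompact w hwF).isClosed.measurableSet
          have hb1 := hcomp p₀ hp₀SL.1 (-m) (T - ε₂)
            hp₀SL.2 ⟨p₀, mem_connectedComponentIn hp₀SL.1, hp₀T.le⟩
          have hb2 := hcomp w hwF (T + 2 * d + ε₂) m
            ⟨w, mem_connectedComponentIn hwF, hw2⟩ hRw
          have hunion : connectedComponentIn F p₀ ∪ connectedComponentIn F w ⊆
              K ∩ ball x r := by
            refine Set.union_subset ?_ ?_ <;>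
              exact (connectedComponentIn_subset F _).trans hFsub
          calc ENNReal.ofReal (2 * m - 2 * d - 2 * ε₂)
              = ENNReal.ofReal ((T - ε₂ - (-m)) + (m - (T + 2 * d + ε₂))) := by
                congr 1; ring
            _ ≤ ENNReal.ofReal (T - ε₂ - (-m)) + ENNReal.ofReal (m - (T + 2 * d + ε₂)) :=
                ENNReal.ofReal_add_le
            _ ≤ μH[1] (connectedComponentIn F p₀) + μH[1] (connectedComponentIn F w) :=
                add_le_add hb1 hb2
            _ = μH[1] (connectedComponentIn F p₀ ∪ connectedComponentIn F w) :=
                (measure_union hdisj hmeas).symm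
            _ ≤ μH[1] (K ∩ ball x r) := measure_mono hunion
  -- conclude from the quantitative step
  by_contra hcon
  push_neg at hcon
  set μ := μH[1] (K ∩ ball x r) with hμdef
  have hμtop : μ ≠ ⊤ := (hcon.trans_le le_top).ne
  have ha0 : 0 < 2 * r - 3 * r * β := by
    have := mul_le_mul_of_nonneg_left hβ (by linarith : (0:ℝ) ≤ 3 * r)
    linarith
  have h1 : μ.toReal < 2 * r - 3 * r * β := by
    have h2 := (ENNReal.toReal_lt_toReal hμtop ENNReal.ofReal_ne_top).mpr hcon
    rwa [ENNReal.toReal_ofReal ha0.le] at h2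
  set η : ℝ := (2 * r - 3 * r * β - μ.toReal) / 2 with hηdef
  have hη : 0 < η := by rw [hηdef]; linarith
  have h2 := main η hη
  have h3 : 2 * r - 3 * r * β - η ≤ μ.toReal := by
    have h4 := ENNReal.toReal_mono hμtop h2
    rwa [ENNReal.toReal_ofReal (by rw [hηdef]; linarith [ENNReal.toReal_nonneg (a := μ)])] at h4
  rw [hηdef] at h3
  linarith
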